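/- arXiv:1505.04308 — 6 statements merged into one kernel-verified Lean document; each statement's English description precedes it below -/
import Mathlib

section
/- Consider the pair breaking problem for parameter Z. Suppose that there exists a colouring function C : X → {1,…,c} for which there exists a symmetry breaking function B. Then for every integer k ≥ 2 and every subset S ⊆ {1,…,Z}, if |S| ≥ (3/2)·k! + Σ_{i=0}^{k−3} k!/(k−i)! (where the sum is empty when k = 2, and note (3/2)·k! is an integer since k! is even for k ≥ 2), then c_S ≥ k, i.e., C uses at least k distinct colours on pairs of elements of S. -/
/-!
A symmetry breaking function `B` separates any two points `u < v` of `S` by the colour `C u v`,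
which is one of the colours used on `S`. Hence `v ↦ (γ ↦ B v γ)` is injective on `S` as a map
into `{0,1}`-vectors indexed by those colours, so `|S| ≤ 2 ^ c_S`. If `c_S < k` this gives
`|S| ≤ 2 ^ (k - 1) ≤ k! < (3/2) k!`, contradicting the size of `S`.
-/

open scoped Nat

namespace Finset

variable {α γ : Type*} [LinearOrder α] [DecidableEq γ]

/-- `#(pairColours S C)` is the paper's `c_S`. -/
def pairColours (S : Finset α) (C : α → α → γ) : Finset γ :=
  ((S ×ˢ S).filter (fun p => p.1 < p.2)).image (fun p => C p.1 p.2)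

theorem mem_pairColours {S : Finset α} {C : α → α → γ} {a b : α}
    (ha : a ∈ S) (hb : b ∈ S) (hab : a < b) : C a b ∈ pairColours S C :=
  mem_image.mpr ⟨(a, b), mem_filter.mpr ⟨mem_product.mpr ⟨ha, hb⟩, hab⟩, rfl⟩

theorem card_le_two_pow_card_pairColours (S : Finset α) (C : α → α → γ) (B : α → γ → Bool)
    (hB : ∀ a ∈ S, ∀ b ∈ S, a < b → B a (C a b) ≠ B b (C a b)) :
    #S ≤ 2 ^ #(pairColours S C) := by
  set T := pairColours S C
  have hinj : Set.InjOn (fun v (γ : T) => B v γ) S := by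
    intro u hu v hv huv
    by_contra hne
    rcases Ne.lt_or_gt hne with hlt | hlt
    · exact hB u hu v hv hlt (congrFun huv ⟨C u v, mem_pairColours hu hv hlt⟩)
    · exact hB v hv u hu hlt (congrFun huv ⟨C v u, mem_pairColours hv hu hlt⟩).symm
  simpa using card_le_card_of_injOn _ (fun _ _ => mem_univ _) hinj

end Finset

theorem Nat.two_pow_pred_le_factorial (n : ℕ) : 2 ^ (n - 1) ≤ n ! := by
  rcases n with _ | n
  · simp
  · simpa [add_comm] using @Nat.factorial_mul_pow_le_factorial 1 n

theorem pair_breaking_colour_lower_bound_general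
    (Z : ℕ)
    (C : ℕ → ℕ → ℕ)
    (B : ℕ → ℕ → Bool)
    (hB : ∀ a b : ℕ, 1 ≤ a → a < b → b ≤ Z → B a (C a b) ≠ B b (C a b))
    (k : ℕ) (hk : 2 ≤ k)
    (S : Finset ℕ) (hS : S ⊆ Finset.Icc 1 Z)
    (hcard : 3 * Nat.factorial k / 2 +
        ∑ i ∈ Finset.range (k - 2), Nat.factorial k / Nat.factorial (k - i)
      ≤ S.card) :
    k ≤ (((S ×ˢ S).filter (fun p => p.1 < p.2)).image
          (fun p => C p.1 p.2)).card := by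
  show k ≤ (S.pairColours C).card
  by_contra! hfew
  have hbreak : ∀ a ∈ S, ∀ b ∈ S, a < b → B a (C a b) ≠ B b (C a b) := fun a ha b hb hab =>
    hB a b (Finset.mem_Icc.mp (hS ha)).1 hab (Finset.mem_Icc.mp (hS hb)).2
  have hfact : 2 ≤ k ! := Nat.factorial_le hk
  have hsmall : S.card ≤ k ! :=
    calc S.card ≤ 2 ^ (S.pairColours C).card :=
          Finset.card_le_two_pow_card_pairColours S C B hbreak
      _ ≤ 2 ^ (k - 1) := Nat.pow_le_pow_right two_pos (by omega)
      _ ≤ k ! := Nat.two_pow_pred_le_factorial k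
  omega

/-- Lemma 1 of the paper: if a colouring `C` of pairs from `{1,…,Z}` admits a
symmetry breaking function, then for every `k ≥ 2` and every subset `S` of
`{1,…,Z}` with `|S| ≥ (3/2)·k! + Σ_{i=0}^{k−3} k!/(k−i)!`, the colouring `C`
uses at least `k` distinct colours on pairs of elements of `S`. -/
theorem pair_breaking_colour_lower_bound
    (Z c : ℕ) (hZ : 0 < Z) (hc : 0 < c)
    (C : ℕ → ℕ → ℕ)
    (hC : ∀ a b : ℕ, 1 ≤ a → a < b → b ≤ Z → C a b ∈ Finset.Icc 1 c)
    (B : ℕ → ℕ → Bool)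
    (hB : ∀ a b : ℕ, 1 ≤ a → a < b → b ≤ Z → B a (C a b) ≠ B b (C a b))
    (k : ℕ) (hk : 2 ≤ k)
    (S : Finset ℕ) (hS : S ⊆ Finset.Icc 1 Z)
    (hcard : 3 * Nat.factorial k / 2 +
        ∑ i ∈ Finset.range (k - 2), Nat.factorial k / Nat.factorial (k - i)
      ≤ S.card) :
    k ≤ (((S ×ˢ S).filter (fun p => p.1 < p.2)).image
          (fun p => C p.1 p.2)).card :=
  pair_breaking_colour_lower_bound_general Z C B hB k hk S hS hcard
end

section
/- Consider the pair breaking problem for parameter Z. Let k ≥ 2 be an integer and suppose Z ≥ 3·k^k. Then for every colouring function C : X → {1,…,c} that admits a symmetry breaking function, we have c ≥ k. -/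
/-!
A symmetry breaking function `B` separates any two elements `a < b` on the colour `C a b`, so the
colour signatures `γ ↦ B a γ` of the elements are pairwise distinct. Hence `Z ≤ 2 ^ c`, whereas
`c < k` would give `2 ^ c < 2 ^ k ≤ k ^ k`.
-/

open Finset

section PairBreaking

variable {α β : Type*} [LinearOrder α] (C : α → α → β) (B : α → β → Bool)

theorem injOn_restrict_of_pair_breaking {s : Set α} {t : Set β}
    (hC : ∀ a ∈ s, ∀ b ∈ s, a < b → C a b ∈ t)
    (hB : ∀ a ∈ s, ∀ b ∈ s, a < b → B a (C a b) ≠ B b (C a b)) :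
    s.InjOn fun a (γ : t) => B a γ := by
  have separated : ∀ a ∈ s, ∀ b ∈ s, a < b → (fun γ : t => B a γ) ≠ fun γ : t => B b γ :=
    fun a ha b hb hab heq => hB a ha b hb hab (congrFun heq ⟨C a b, hC a ha b hb hab⟩)
  intro a ha b hb heq
  by_contra hne
  rcases lt_or_gt_of_ne hne with hab | hba
  · exact separated a ha b hb hab heq
  · exact separated b hb a ha hba heq.symm

theorem card_le_two_pow_of_pair_breaking (s : Finset α) (t : Finset β)
    (hC : ∀ a ∈ s, ∀ b ∈ s, a < b → C a b ∈ t)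
    (hB : ∀ a ∈ s, ∀ b ∈ s, a < b → B a (C a b) ≠ B b (C a b)) :
    #s ≤ 2 ^ #t := by
  classical
  have h := card_le_card_of_injOn _ (fun a _ => mem_univ _)
    (injOn_restrict_of_pair_breaking C B (s := ↑s) (t := ↑t) hC hB)
  simpa using h

end PairBreaking

theorem pair_breaking_colour_count_general
    (Z c k : ℕ) (hk : 2 ≤ k) (hZ : 3 * k ^ k ≤ Z)
    (C : ℕ → ℕ → ℕ)
    (hC : ∀ a b : ℕ, 1 ≤ a → a < b → b ≤ Z → C a b ∈ Finset.Icc 1 c)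
    (B : ℕ → ℕ → Bool)
    (hB : ∀ a b : ℕ, 1 ≤ a → a < b → b ≤ Z → B a (C a b) ≠ B b (C a b)) :
    k ≤ c := by
  by_contra! hck
  have hZc : Z ≤ 2 ^ c := by
    simpa using card_le_two_pow_of_pair_breaking C B (Icc 1 Z) (Icc 1 c)
      (fun a ha b hb hab => hC a b (mem_Icc.1 ha).1 hab (mem_Icc.1 hb).2)
      (fun a ha b hb hab => hB a b (mem_Icc.1 ha).1 hab (mem_Icc.1 hb).2)
  have hck' : 2 ^ c < k ^ k :=
    (Nat.pow_lt_pow_right one_lt_two hck).trans_le (Nat.pow_le_pow_left hk k)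
  omega

/-- For the pair breaking problem with parameter `Z ≥ 3·k^k` (`k ≥ 2`), every
colouring `C` into colours `{1,…,c}` admitting a symmetry breaking function
satisfies `c ≥ k`. -/
theorem pair_breaking_colour_count
    (Z c k : ℕ) (hc : 0 < c) (hk : 2 ≤ k) (hZ : 3 * k ^ k ≤ Z)
    (C : ℕ → ℕ → ℕ)
    (hC : ∀ a b : ℕ, 1 ≤ a → a < b → b ≤ Z → C a b ∈ Finset.Icc 1 c)
    (B : ℕ → ℕ → Bool)
    (hB : ∀ a b : ℕ, 1 ≤ a → a < b → b ≤ Z → B a (C a b) ≠ B b (C a b)) :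
    k ≤ c :=
  pair_breaking_colour_count_general Z c k hk hZ C hC B hB
end

section
/- Consider the pair breaking problem for parameter Z with Z ≥ 2. For every colouring function C : X → {1,…,c} that admits a symmetry breaking function, we have 3·(c+1)² > log₂ Z; in particular, c ≥ √((log₂ Z)/3) − 1, so the number of colours is Ω(√(log Z)). -/
/-! Each point `a` is determined by its bit vector `γ ↦ B a γ` over the `c` colours, since two
points `a < b` already differ at the colour `C a b`. Hence `Z ≤ 2 ^ c`, so `log₂ Z ≤ c`. -/

open Finset

theorem Finset.card_le_two_pow_of_separating {α β : Type*} (s : Finset α) (t : Finset β)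
    (B : α → β → Bool) (hsep : ∀ a ∈ s, ∀ b ∈ s, a ≠ b → ∃ γ ∈ t, B a γ ≠ B b γ) :
    #s ≤ 2 ^ #t := by
  classical
  have hinj : Set.InjOn (fun a (γ : t) => B a γ) s := by
    intro a ha b hb hab
    by_contra hne
    obtain ⟨γ, hγ, hdiff⟩ := hsep a ha b hb hne
    exact hdiff (congrFun hab ⟨γ, hγ⟩)
  simpa using card_le_card_of_injOn _ (fun _ _ => mem_univ _) hinj

theorem Real.logb_two_natCast_le_of_le_two_pow {n k : ℕ} (h : n ≤ 2 ^ k) :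
    Real.logb 2 n ≤ k := by
  rcases Nat.eq_zero_or_pos n with rfl | hn
  · simp
  calc Real.logb 2 n ≤ Real.logb 2 ((2 : ℝ) ^ k) :=
        Real.logb_le_logb_of_le (by norm_num) (by exact_mod_cast hn) (by exact_mod_cast h)
    _ = k := by simp [Real.logb_pow]

theorem pair_breaking_colour_sqrt_log_lower_bound_general
    (Z c : ℕ)
    (C : ℕ → ℕ → ℕ)
    (hC : ∀ a b : ℕ, 1 ≤ a → a < b → b ≤ Z → C a b ∈ Finset.Icc 1 c)
    (B : ℕ → ℕ → Bool)
    (hB : ∀ a b : ℕ, 1 ≤ a → a < b → b ≤ Z → B a (C a b) ≠ B b (C a b)) :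
    Real.logb 2 (Z : ℝ) < 3 * ((c : ℝ) + 1) ^ 2 := by
  have hsep : ∀ a ∈ Icc 1 Z, ∀ b ∈ Icc 1 Z, a ≠ b → ∃ γ ∈ Icc 1 c, B a γ ≠ B b γ := by
    intro a ha b hb hne
    rw [mem_Icc] at ha hb
    rcases hne.lt_or_gt with hab | hba
    · exact ⟨C a b, hC a b ha.1 hab hb.2, hB a b ha.1 hab hb.2⟩
    · exact ⟨C b a, hC b a hb.1 hba ha.2, (hB b a hb.1 hba ha.2).symm⟩
  have hZ : Z ≤ 2 ^ c := by
    simpa using card_le_two_pow_of_separating _ _ B hsep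
  have hlog := Real.logb_two_natCast_le_of_le_two_pow hZ
  nlinarith

/-- Corollary 1 of the paper: for the pair breaking problem with parameter
`Z ≥ 2`, every colouring admitting a symmetry breaking function uses `c`
colours with `3·(c+1)² > log₂ Z`, hence `c ∈ Ω(√(log Z))`. -/
theorem pair_breaking_colour_sqrt_log_lower_bound
    (Z c : ℕ) (hZ : 2 ≤ Z) (hc : 0 < c)
    (C : ℕ → ℕ → ℕ)
    (hC : ∀ a b : ℕ, 1 ≤ a → a < b → b ≤ Z → C a b ∈ Finset.Icc 1 c)
    (B : ℕ → ℕ → Bool)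
    (hB : ∀ a b : ℕ, 1 ≤ a → a < b → b ≤ Z → B a (C a b) ≠ B b (C a b)) :
    Real.logb 2 (Z : ℝ) < 3 * ((c : ℝ) + 1) ^ 2 :=
  pair_breaking_colour_sqrt_log_lower_bound_general Z c C hC B hB
end

section
/- For every natural number y ≥ 4, setting z = y² and x = ⌈y^{3/2}⌉ (the least natural number that is at least the real number y^{3/2}), one has z^x ≥ x! · 2^y; equivalently, z^x / x! ≥ 2^y. (This shows that the family of height-2 markers with z leaves and root degree x is large enough, using x ≤ y^{7/4} and x! ≤ x^x.) -/
/-!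
Since `x! ≤ x^x`, it suffices that `x^x · 2^y ≤ (y²)^x`; squaring, this follows from
`2^(2y) ≤ 2^x` and `2x² ≤ y⁴`. Both are statements about `x = ⌈y^{3/2}⌉`, which is the least
natural number with `y³ ≤ x²`: the lower bound `y³ ≤ x²` gives `2y ≤ x` once `y ≥ 4`, and
minimality `(x - 1)² < y³` gives `2x² ≤ y⁴`.
-/

open Nat

theorem Nat.factorial_mul_two_pow_le_pow {x y z : ℕ} (hxy : 2 * y ≤ x) (hxz : 2 * x ^ 2 ≤ z ^ 2) :
    x ! * 2 ^ y ≤ z ^ x := by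
  refine (Nat.pow_le_pow_iff_left two_ne_zero).1 ?_
  calc (x ! * 2 ^ y) ^ 2 ≤ (x ^ x * 2 ^ y) ^ 2 := by gcongr; exact Nat.factorial_le_pow x
    _ = (x ^ 2) ^ x * 2 ^ (2 * y) := by ring
    _ ≤ (x ^ 2) ^ x * 2 ^ x := by gcongr; norm_num
    _ = (2 * x ^ 2) ^ x := by ring
    _ ≤ (z ^ 2) ^ x := by gcongr
    _ = (z ^ x) ^ 2 := by ring

theorem Nat.isLeast_ceil_rpow_three_halves (y : ℕ) :
    IsLeast {n : ℕ | y ^ 3 ≤ n ^ 2} ⌈(y : ℝ) ^ ((3 : ℝ) / 2)⌉₊ := by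
  have hsq : ((y : ℝ) ^ ((3 : ℝ) / 2)) ^ 2 = (y : ℝ) ^ 3 := by
    rw [← Real.rpow_mul_natCast (Nat.cast_nonneg y)]; norm_num
  have ceil_le_iff (n : ℕ) : ⌈(y : ℝ) ^ ((3 : ℝ) / 2)⌉₊ ≤ n ↔ y ^ 3 ≤ n ^ 2 := by
    rw [Nat.ceil_le, ← pow_le_pow_iff_left₀ (by positivity) (Nat.cast_nonneg n) two_ne_zero, hsq]
    exact_mod_cast Iff.rfl
  exact ⟨(ceil_le_iff _).1 le_rfl, fun n hn => (ceil_le_iff n).2 hn⟩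

theorem two_mul_le_of_isLeast_sq_ge_cube {x y : ℕ} (hx : IsLeast {n : ℕ | y ^ 3 ≤ n ^ 2} x)
    (hy : 4 ≤ y) : 2 * y ≤ x := by
  by_contra! h
  have : x ^ 2 < (2 * y) ^ 2 := Nat.pow_lt_pow_left h two_ne_zero
  have : (2 * y) ^ 2 ≤ y ^ 3 := by nlinarith
  have : y ^ 3 ≤ x ^ 2 := hx.1
  omega

theorem two_mul_sq_le_of_isLeast_sq_ge_cube {x y : ℕ} (hx : IsLeast {n : ℕ | y ^ 3 ≤ n ^ 2} x)
    (hy : 4 ≤ y) : 2 * x ^ 2 ≤ (y ^ 2) ^ 2 := by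
  obtain ⟨m, rfl⟩ : ∃ m, x = m + 1 :=
    Nat.exists_eq_add_one.2 (by linarith [two_mul_le_of_isLeast_sq_ge_cube hx hy])
  have hm : m ^ 2 < y ^ 3 := lt_of_not_ge fun h => by have := hx.2 h; omega
  have hmy : m < y ^ 2 := by
    refine (Nat.pow_lt_pow_iff_left two_ne_zero).1 ?_
    calc m ^ 2 < y ^ 3 := hm
      _ ≤ (y ^ 2) ^ 2 := by rw [← pow_mul]; exact Nat.pow_le_pow_right (by omega) (by norm_num)
  nlinarith

/-- For every natural `y ≥ 4`, with `z = y²` and `x = ⌈y^{3/2}⌉`, one has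
`z^x ≥ x! · 2^y`. -/
theorem markers_count_large (y : ℕ) (hy : 4 ≤ y) :
    Nat.factorial ⌈(y : ℝ) ^ ((3 : ℝ) / 2)⌉₊ * 2 ^ y
      ≤ (y ^ 2) ^ ⌈(y : ℝ) ^ ((3 : ℝ) / 2)⌉₊ := by
  have hx := Nat.isLeast_ceil_rpow_three_halves y
  exact Nat.factorial_mul_two_pow_le_pow (two_mul_le_of_isLeast_sq_ge_cube hx hy)
    (two_mul_sq_le_of_isLeast_sq_ge_cube hx hy)
end

section
/- Let Δ ≥ 2 be an integer and let a : ℕ → ℕ satisfy a(0) = 1, a(1) = Δ + 1, and a(x+2) = 1 + Δ + x + (Δ−1)²·a(x) for all x ≥ 0. Then a(x) ≤ 3·Δ^x for every natural number x. (Here a(x) is the number of nodes of the confusion subtree T_i(x) of height x built from degree parameter Δ, which satisfies exactly this recurrence.) -/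
/-! Two-step induction: since `Δ² − (Δ−1)² = 2Δ − 1`, the bound `3·Δ^x` on `a x` leaves a slack of
`3·(2Δ−1)·Δ^x` in `3·Δ^(x+2)`, which absorbs the additive term `1 + Δ + x` because `x < Δ^x`. -/

theorem one_add_add_add_sq_sub_one_mul_le_three_mul_pow {Δ : ℕ} (hΔ : 2 ≤ Δ) (x b : ℕ)
    (hb : b ≤ 3 * Δ ^ x) : 1 + Δ + x + (Δ - 1) ^ 2 * b ≤ 3 * Δ ^ (x + 2) := by
  obtain ⟨d, rfl⟩ : ∃ d, Δ = d + 2 := ⟨Δ - 2, by omega⟩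
  have hx : x < (d + 2) ^ x := Nat.lt_pow_self (by omega)
  have hpos : 1 ≤ (d + 2) ^ x := Nat.one_le_pow _ _ (by omega)
  calc 1 + (d + 2) + x + (d + 2 - 1) ^ 2 * b
      ≤ 1 + (d + 2) + x + (d + 1) ^ 2 * (3 * (d + 2) ^ x) := by
        rw [show d + 2 - 1 = d + 1 by omega]; gcongr
    _ ≤ 3 * (d + 2) ^ (x + 2) := by
        rw [pow_add]; nlinarith

/-- The size `a x` of the confusion subtree of height `x` with degree
parameter `Δ ≥ 2`, given by `a 0 = 1`, `a 1 = Δ+1` and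
`a (x+2) = 1 + Δ + x + (Δ−1)²·a x`, satisfies `a x ≤ 3·Δ^x`. -/
theorem confusion_tree_size_bound (Δ : ℕ) (hΔ : 2 ≤ Δ) (a : ℕ → ℕ)
    (h0 : a 0 = 1) (h1 : a 1 = Δ + 1)
    (hrec : ∀ x : ℕ, a (x + 2) = 1 + Δ + x + (Δ - 1) ^ 2 * a x) :
    ∀ x : ℕ, a x ≤ 3 * Δ ^ x := by
  intro x
  induction x using Nat.twoStepInduction with
  | zero => simp [h0]
  | one => rw [h1, pow_one]; omega
  | more n ih _ =>
    rw [hrec]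
    exact one_add_add_add_sq_sub_one_mul_le_three_mul_pow hΔ n (a n) ih
end

section
/- Let G be a finite tree on a vertex set V and let h ≥ 1 be an integer. Assume that the diameter of G is exactly 2h, i.e., dist(u,w) ≤ 2h for all u,w ∈ V and dist(a,b) = 2h for some a,b ∈ V. Let c ∈ V be a vertex with dist(c,u) ≤ h for every u ∈ V (a central node), and let v ∈ V be a vertex with dist(v,c) ≥ h−1. Then every path in G starting at v whose length is at least 2h−1 contains c among its vertices. -/
/-!
Suppose `c` is not on the path `p` from `v` to `w`. In a tree, the path from `c` to `p` hits `p`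
in a single vertex `m ≠ c`, and the paths from `c` to `v` and to `w` both run through `m`.
Hence `dist c v + dist c w = 2 dist c m + length p ≥ length p + 2`, while the left side is at
most `2h` because `c` is central; so `length p ≤ 2h - 2`.
-/

namespace SimpleGraph

variable {V : Type*} {G : SimpleGraph V}

lemma Walk.IsPath.append {u v w : V} {p : G.Walk u v} {q : G.Walk v w} (hp : p.IsPath)
    (hq : q.IsPath) (hpq : ∀ x ∈ p.support, x ∈ q.support → x = v) : (p.append q).IsPath := by
  have hq' := hq.support_nodup
  rw [← q.cons_tail_support, List.nodup_cons] at hq'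
  rw [Walk.isPath_def, Walk.support_append]
  refine List.Nodup.append hp.support_nodup hq'.2 fun x hxp hxq => ?_
  obtain rfl := hpq x hxp (List.mem_of_mem_tail hxq)
  exact hq'.1 hxq

lemma IsAcyclic.length_eq_dist_of_isPath (hG : G.IsAcyclic) {u v : V} {p : G.Walk u v}
    (hp : p.IsPath) : p.length = G.dist u v := by
  obtain ⟨q, hq, hlen⟩ := p.reachable.exists_path_of_dist
  have hpq := congrArg Subtype.val ((hG.subsingleton_path u v).elim ⟨p, hp⟩ ⟨q, hq⟩)
  simp only at hpq
  rw [hpq, hlen]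

lemma Walk.exists_isPath_meeting_set_only_at_end [DecidableEq V] {S : Set V} {a b : V}
    (q : G.Walk a b) (hb : b ∈ S) :
    ∃ m ∈ S, ∃ r : G.Walk a m, r.IsPath ∧ ∀ x ∈ r.support, x ∈ S → x = m := by
  induction q with
  | nil => exact ⟨_, hb, .nil, .nil, by simp⟩
  | @cons a _ _ hadj q ih =>
    by_cases ha : a ∈ S
    · exact ⟨a, ha, .nil, .nil, by simp⟩
    obtain ⟨m, hm, r, -, hrS⟩ := ih hb
    refine ⟨m, hm, (Walk.cons hadj r).bypass, Walk.bypass_isPath _, fun x hx hxS => ?_⟩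
    rcases List.mem_cons.mp (Walk.support_bypass_subset_support _ hx) with rfl | hxr
    · exact absurd hxS ha
    · exact hrS x hxr hxS

lemma IsAcyclic.dist_add_dist_eq_of_meet [DecidableEq V] (hG : G.IsAcyclic) {v w c m : V}
    {p : G.Walk v w} (hp : p.IsPath) {r : G.Walk c m} (hr : r.IsPath) (hm : m ∈ p.support)
    (hrp : ∀ x ∈ r.support, x ∈ p.support → x = m) :
    G.dist c v + G.dist c w = 2 * r.length + p.length := by
  have hv : G.dist c v = r.length + (p.takeUntil m hm).length := by
    refine (hG.length_eq_dist_of_isPath (hr.append (hp.takeUntil hm).reverse ?_)).symm.trans ?_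
    · intro x hxr hxt
      rw [Walk.support_reverse, List.mem_reverse] at hxt
      exact hrp x hxr (p.support_takeUntil_subset_support hm hxt)
    · rw [Walk.length_append, Walk.length_reverse]
  have hw : G.dist c w = r.length + (p.dropUntil m hm).length := by
    refine (hG.length_eq_dist_of_isPath (hr.append (hp.dropUntil hm) ?_)).symm.trans ?_
    · exact fun x hxr hxd => hrp x hxr (p.support_dropUntil_subset_support hm hxd)
    · rw [Walk.length_append]
  have hsplit := congrArg Walk.length (p.take_spec hm)
  rw [Walk.length_append] at hsplit
  omega

lemma IsAcyclic.length_add_two_le_dist_add_dist (hG : G.IsAcyclic) {v w c : V}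
    {p : G.Walk v w} (hp : p.IsPath) (hc : c ∉ p.support) (hcv : G.Reachable c v) :
    p.length + 2 ≤ G.dist c v + G.dist c w := by
  obtain ⟨q⟩ := hcv
  classical
  obtain ⟨m, hm, r, hr, hrp⟩ :=
    q.exists_isPath_meeting_set_only_at_end (S := {x | x ∈ p.support}) p.start_mem_support
  have hr_pos : 1 ≤ r.length := by
    by_contra! hr0
    exact hc (Walk.eq_of_length_eq_zero (Nat.lt_one_iff.mp hr0) ▸ hm)
  have hsum := hG.dist_add_dist_eq_of_meet hp hr hm hrp
  omega

end SimpleGraph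

theorem central_node_on_long_paths_general {V : Type*}
    (G : SimpleGraph V) (hG : G.IsTree) (h : ℕ)
    (c : V) (hc : ∀ u : V, G.dist c u ≤ h)
    (v : V) :
    ∀ (w : V) (p : G.Walk v w), p.IsPath → 2 * h - 1 ≤ p.length →
      c ∈ p.support := by
  intro w p hp hlen
  by_contra hcp
  have hsum := hG.isAcyclic.length_add_two_le_dist_add_dist hp hcp (hG.connected c v)
  have hcv := hc v
  have hcw := hc w
  omega

/-- In a finite tree of diameter exactly `2h` (`h ≥ 1`) with central node `c`
(`dist(c,u) ≤ h` for all `u`), every path of length at least `2h−1` starting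
at a vertex `v` with `dist(v,c) ≥ h−1` contains `c`. -/
theorem central_node_on_long_paths {V : Type*} [Fintype V]
    (G : SimpleGraph V) (hG : G.IsTree) (h : ℕ) (hh : 1 ≤ h)
    (hdiam_le : ∀ u w : V, G.dist u w ≤ 2 * h)
    (hdiam_eq : ∃ a b : V, G.dist a b = 2 * h)
    (c : V) (hc : ∀ u : V, G.dist c u ≤ h)
    (v : V) (hv : h - 1 ≤ G.dist v c) :
    ∀ (w : V) (p : G.Walk v w), p.IsPath → 2 * h - 1 ≤ p.length →
      c ∈ p.support :=
  central_node_on_long_paths_general G hG h c hc v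
end
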